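/- For any weak composition s, the s-Tamari poset (the restriction of the s-weak order to s-Tamari trees) is a sublattice of the s-weak order: the join and meet of two s-Tamari trees in the s-weak order are s-Tamari trees. -/

import Mathlib

/-- Planar rooted trees: leaves are unlabeled; internal nodes carry a natural
number label and an ordered list of children. -/
inductive STree : Type where
  | leaf : STree
  | node : ℕ → List STree → STree

namespace STree

mutual
  /-- `x` occurs as the label of an internal node of the tree. -/
  def mem (x : ℕ) : STree → Bool
    | .leaf => false
    | .node a cs => x == a || memL x cs
  def memL (x : ℕ) : List STree → Bool
    | [] => false
    | t :: ts => mem x t || memL x ts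
end

mutual
  /-- The list of internal node labels, in preorder. -/
  def labels : STree → List ℕ
    | .leaf => []
    | .node a cs => a :: labelsL cs
  def labelsL : List STree → List ℕ
    | [] => []
    | t :: ts => labels t ++ labelsL ts
end

mutual
  /-- Local well-formedness for the signature `s` : an internal node labeled `a`
  has `s a + 1` children, and all labels below it are smaller than `a`. -/
  def wf (s : ℕ → ℕ) : STree → Prop
    | .leaf => True
    | .node a cs => cs.length = s a + 1 ∧ (∀ b ∈ labelsL cs, b < a) ∧ wfL s cs
  def wfL (s : ℕ → ℕ) : List STree → Prop
    | [] => True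
    | t :: ts => wf s t ∧ wfL s ts
end

/-- `T` is an `s`-decreasing tree: its internal nodes are labeled bijectively by
`1, …, n`, node `i` has `s i + 1` ordered children, and all descendants of a node
have smaller labels. -/
def IsSDecreasingTree (n : ℕ) (s : ℕ → ℕ) (T : STree) : Prop :=
  wf s T ∧ (labels T).Perm (List.range' 1 n)

/-- Index of the first tree of the list containing the label `x`. -/
def idxOf (x : ℕ) : List STree → ℕ
  | [] => 0
  | t :: ts => if mem x t then 0 else idxOf x ts + 1

mutual
  /-- The cardinality `card_T(y,x)` of the pair `(y,x)` in the tree: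
  `0` if `x` is (weakly) left of `y`, `i` if `x` lies in the `i`-th child
  subtree of `y`, and `s y` if `x` is right of `y`. -/
  def card (s : ℕ → ℕ) (y x : ℕ) : STree → ℕ
    | .leaf => 0
    | .node a cs => if a = y then idxOf x cs else cardL s y x cs
  def cardL (s : ℕ → ℕ) (y x : ℕ) : List STree → ℕ
    | [] => 0
    | t :: ts =>
      if mem y t then
        (if mem x t then card s y x t else if memL x ts then s y else 0)
      else (if mem x t then 0 else cardL s y x ts)
end

/-- The tree-inversion multiset of `T`, as a multiplicity function on pairs
`(y,x)` with `1 ≤ x < y ≤ n`. -/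
def treeInv (n : ℕ) (s : ℕ → ℕ) (T : STree) : ℕ → ℕ → ℕ := fun y x =>
  if 1 ≤ x ∧ x < y ∧ y ≤ n then card s y x T else 0

/-- A multi inversion set on `1, …, n` bounded by the weak composition `s`. -/
def IsMultiInvSet (n : ℕ) (s : ℕ → ℕ) (I : ℕ → ℕ → ℕ) : Prop :=
  (∀ y x, I y x ≤ s y) ∧ ∀ y x, ¬(1 ≤ x ∧ x < y ∧ y ≤ n) → I y x = 0

/-- Transitivity: for `a < b < c`, `card(c,b) = i` implies `card(b,a) = 0` or
`card(c,a) ≥ i`. -/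
def InvTransitive (I : ℕ → ℕ → ℕ) : Prop :=
  ∀ a b c : ℕ, a < b → b < c → I b a = 0 ∨ I c b ≤ I c a

/-- Planarity: for `a < b < c`, `card(c,a) = i` implies `card(b,a) = s b` or
`card(c,b) ≥ i`. -/
def InvPlanar (s : ℕ → ℕ) (I : ℕ → ℕ → ℕ) : Prop :=
  ∀ a b c : ℕ, a < b → b < c → I b a = s b ∨ I c a ≤ I c b

/-- An `s`-tree-inversion set: a bounded multi inversion set that is transitive
and planar. -/
def IsTreeInvSet (n : ℕ) (s : ℕ → ℕ) (I : ℕ → ℕ → ℕ) : Prop :=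
  IsMultiInvSet n s I ∧ InvTransitive I ∧ InvPlanar s I

/-- Inclusion of multi inversion sets: pointwise comparison of multiplicities. -/
def invLE (I J : ℕ → ℕ → ℕ) : Prop := ∀ y x, I y x ≤ J y x

/-- The `s`-weak order: inclusion of tree-inversion multisets. -/
def sWeakLE (n : ℕ) (s : ℕ → ℕ) (T R : STree) : Prop :=
  invLE (treeInv n s T) (treeInv n s R)

/-- Union of multi inversion sets: pointwise maximum. -/
def invUnion (I J : ℕ → ℕ → ℕ) : ℕ → ℕ → ℕ := fun y x => max (I y x) (J y x)

/-- Transitive closure: `tc I (c,a)` is the maximal value of `I (b₁, b₂)` over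
all transitivity paths `c = b₁ > b₂ > … > b_k = a` (consecutive entries have
positive multiplicity). -/
noncomputable def tc (I : ℕ → ℕ → ℕ) : ℕ → ℕ → ℕ := fun c a =>
  sSup {v | ∃ (b : ℕ) (l : List ℕ),
    List.Chain (fun u w => w < u ∧ 0 < I u w) c (b :: l) ∧
    (b :: l).getLast (List.cons_ne_nil b l) = a ∧ v = I c b}

/-- Adding the inversion `(c,a)`: increase its multiplicity by one. -/
def addInv (I : ℕ → ℕ → ℕ) (c a : ℕ) : ℕ → ℕ → ℕ := fun y x =>
  if y = c ∧ x = a then I y x + 1 else I y x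

mutual
  /-- `a` is a (proper) descendant of the node labeled `c`. -/
  def descIn (c a : ℕ) : STree → Bool
    | .leaf => false
    | .node b cs => (b == c && memL a cs) || descInL c a cs
  def descInL (c a : ℕ) : List STree → Bool
    | [] => false
    | t :: ts => descIn c a t || descInL c a ts
end

mutual
  /-- `a` belongs to the rightmost child subtree of the node labeled `c`. -/
  def inRight (c a : ℕ) : STree → Bool
    | .leaf => false
    | .node b cs =>
      (b == c && (match cs.getLast? with
        | some t => mem a t
        | none => false)) || inRightL c a cs
  def inRightL (c a : ℕ) : List STree → Bool
    | [] => false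
    | t :: ts => inRight c a t || inRightL c a ts
end

mutual
  /-- `a` belongs to the leftmost child subtree of the node labeled `c`. -/
  def inLeft (c a : ℕ) : STree → Bool
    | .leaf => false
    | .node b cs =>
      (b == c && (match cs.head? with
        | some t => mem a t
        | none => false)) || inLeftL c a cs
  def inLeftL (c a : ℕ) : List STree → Bool
    | [] => false
    | t :: ts => inLeft c a t || inLeftL c a ts
end

mutual
  /-- The rightmost child subtree of the node labeled `a` is empty (a leaf). -/
  def rightEmpty (a : ℕ) : STree → Bool
    | .leaf => false
    | .node b cs =>
      (b == a && (match cs.getLast? with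
        | some .leaf => true
        | _ => false)) || rightEmptyL a cs
  def rightEmptyL (a : ℕ) : List STree → Bool
    | [] => false
    | t :: ts => rightEmpty a t || rightEmptyL a ts
end

/-- `(a,c)` is a tree-ascent of `T`: `a` is a descendant of `c`, not in the
rightmost subtree of `c`; `a` lies in the rightmost subtree of any `b` with
`a < b < c` having `a` as a descendant; and if `s a > 0` the rightmost
(strict right) subtree of `a` is empty. -/
def IsTreeAscent (s : ℕ → ℕ) (T : STree) (a c : ℕ) : Prop :=
  a < c ∧ descIn c a T = true ∧ inRight c a T = false ∧
  (∀ b : ℕ, a < b → b < c → descIn b a T = true → inRight b a T = true) ∧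
  (0 < s a → rightEmpty a T = true)

/-- `a` is the root label of the tree. -/
def hasRoot (a : ℕ) : STree → Bool
  | .leaf => false
  | .node b _ => a == b

mutual
  /-- `a` is a direct child of the node `c`, but not its rightmost child. -/
  def nonRightChild (c a : ℕ) : STree → Bool
    | .leaf => false
    | .node b cs => (b == c && cs.dropLast.any (hasRoot a)) || nonRightChildL c a cs
  def nonRightChildL (c a : ℕ) : List STree → Bool
    | [] => false
    | t :: ts => nonRightChild c a t || nonRightChildL c a ts
end

/-- `(a,c)` is a Tamari-ascent of `T`: `a` is a non-right child of `c`. -/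
def IsTamariAscent (T : STree) (a c : ℕ) : Prop :=
  a < c ∧ nonRightChild c a T = true

mutual
  /-- Horizontal mirror image of a tree: the order of children is reversed at
  every internal node. -/
  def mirror : STree → STree
    | .leaf => .leaf
    | .node a cs => .node a (mirrorL cs)
  def mirrorL : List STree → List STree
    | [] => []
    | t :: ts => mirrorL ts ++ [mirror t]
end

/-- `T` is an `s`-Tamari tree: `card(c,a) ≤ card(c,b)` for all `a < b < c`. -/
def TamariProp (n : ℕ) (s : ℕ → ℕ) (T : STree) : Prop :=
  ∀ a b c : ℕ, a < b → b < c → treeInv n s T c a ≤ treeInv n s T c b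

/-- `T` is an `s`-maximal-Tamari tree: `card(b,a) = s b` implies
`card(c,a) = s c` for all `c > b`. -/
def MaxTamariProp (n : ℕ) (s : ℕ → ℕ) (T : STree) : Prop :=
  ∀ a b c : ℕ, 1 ≤ a → a < b → b < c → c ≤ n →
    treeInv n s T b a = s b → treeInv n s T c a = s c

/-- The projection `π↓` on inversion sets:
`card_Q(c,a) = min { card_T(c,b) : a ≤ b < c }`. -/
noncomputable def pidownInv (n : ℕ) (s : ℕ → ℕ) (T : STree) : ℕ → ℕ → ℕ :=
  fun c a => sInf {v | ∃ b : ℕ, a ≤ b ∧ b < c ∧ v = treeInv n s T c b}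

open scoped Classical in
/-- The projection `π↑` on inversion sets: `card_R(c,a) = s c` if there is
`a < b < c` with `card_T(b,a) = s b`, and `card_R(c,a) = card_T(c,a)` otherwise. -/
noncomputable def piupInv (n : ℕ) (s : ℕ → ℕ) (T : STree) : ℕ → ℕ → ℕ :=
  fun c a =>
    if 1 ≤ a ∧ a < c ∧ c ≤ n then
      if ∃ b : ℕ, a < b ∧ b < c ∧ treeInv n s T b a = s b then s c
      else treeInv n s T c a
    else 0

end STree

/-!
The inversion multiplicities `treeInv` of `s`-decreasing trees are exactly the bounded,
transitive and planar functions (`ofInv` rebuilds a tree from them). Hence the join of `T` and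
`R` has inversions `tc (inv T ⊔ inv R)`, the least transitive function above both. Planarity
survives the transitive closure, and so does the Tamari condition `card(c,a) ≤ card(c,b)`: a
transitivity path from `c` down to `a` can always be rerouted through `b`. The meet is the
mirror image of a join under `card ↦ s - card`, which swaps transitivity and planarity and
turns the Tamari condition into `card(c,b) ≤ card(c,a)`, again stable under transitive closure.
-/

namespace STree

@[elab_as_elim]
theorem childInduction {P : STree → Prop} (leaf : P .leaf)
    (node : ∀ a cs, (∀ t ∈ cs, P t) → P (.node a cs)) (t : STree) : P t :=
  STree.rec (motive_2 := fun cs => ∀ t ∈ cs, P t) leaf node (fun _ h => absurd h List.not_mem_nil)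
    (fun _ _ ht hts _ hu => (List.mem_cons.1 hu).elim (· ▸ ht) (hts _)) t

mutual
theorem mem_iff (x : ℕ) : ∀ t : STree, mem x t = true ↔ x ∈ labels t
  | .leaf => by simp [mem, labels]
  | .node a cs => by simp [mem, labels, memL_iff x cs]
theorem memL_iff (x : ℕ) : ∀ l : List STree, memL x l = true ↔ x ∈ labelsL l
  | [] => by simp [memL, labelsL]
  | t :: ts => by simp [memL, labelsL, mem_iff x t, memL_iff x ts]
end

theorem labelsL_eq_flatMap : ∀ l : List STree, labelsL l = l.flatMap labels
  | [] => rfl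
  | t :: ts => by rw [labelsL, labelsL_eq_flatMap ts, List.flatMap_cons]

theorem wfL_iff {s : ℕ → ℕ} : ∀ {l : List STree}, wfL s l ↔ ∀ t ∈ l, wf s t
  | [] => by simp [wfL]
  | t :: ts => by simp [wfL, wfL_iff]

theorem mem_node_iff {s : ℕ → ℕ} {a x : ℕ} {cs : List STree} (hwf : wf s (.node a cs)) :
    x ∈ labels (.node a cs) ↔ x = a ∨ (memL x cs = true ∧ x < a) := by
  rw [wf] at hwf
  simp only [labels, List.mem_cons, memL_iff]
  exact or_congr_right ⟨fun h => ⟨h, hwf.2.1 x h⟩, And.left⟩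

theorem idxOf_eq_findIdx (x : ℕ) : ∀ l : List STree, idxOf x l = l.findIdx (mem x)
  | [] => rfl
  | t :: ts => by cases h : mem x t <;> simp [idxOf, List.findIdx_cons, h, idxOf_eq_findIdx x ts]

theorem idxOf_lt_length {x : ℕ} {l : List STree} (h : memL x l = true) :
    idxOf x l < l.length := by
  rw [idxOf_eq_findIdx, List.findIdx_lt_length]
  simpa [memL_iff, labelsL_eq_flatMap, mem_iff] using h

theorem getD_idxOf_mem {x : ℕ} : ∀ {l : List STree}, memL x l = true →
    l.getD (idxOf x l) .leaf ∈ l ∧ mem x (l.getD (idxOf x l) .leaf) = true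
  | [], h => by simp [memL] at h
  | t :: ts, h => by
    by_cases hxt : mem x t = true
    · simp [idxOf, hxt]
    · have := getD_idxOf_mem (l := ts) (by simpa [memL, hxt] using h)
      simp_all [idxOf]

theorem cardL_eq {s : ℕ → ℕ} {y x : ℕ} : ∀ {l : List STree}, memL y l = true →
    memL x l = true → cardL s y x l =
      if idxOf x l < idxOf y l then 0
      else if idxOf y l < idxOf x l then s y
      else card s y x (l.getD (idxOf y l) .leaf)
  | [], hy, _ => by simp [memL] at hy
  | t :: ts, hy, hx => by
    cases hyt : mem y t <;> cases hxt : mem x t <;>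
      simp_all [memL, cardL, idxOf, cardL_eq (l := ts)]

theorem card_le {s : ℕ → ℕ} {y x : ℕ} (hxy : x < y) (t : STree) (hwf : wf s t)
    (hy : y ∈ labels t) (hx : x ∈ labels t) : card s y x t ≤ s y := by
  induction t using childInduction with
  | leaf => simp [labels] at hy
  | node a cs ih =>
    rw [mem_node_iff hwf] at hx hy
    by_cases hay : a = y
    · have := idxOf_lt_length (hx.resolve_left (by omega)).1
      simp only [card, if_pos hay]
      have := hwf.1
      subst hay
      omega
    · have hyc := hy.resolve_left (Ne.symm hay)
      have hxc := (hx.resolve_left (by omega)).1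
      obtain ⟨hmem, hyt⟩ := getD_idxOf_mem hyc.1
      obtain ⟨-, hxt⟩ := getD_idxOf_mem hxc
      have hwft := wfL_iff.1 hwf.2.2 _ hmem
      simp only [card, if_neg hay, cardL_eq hyc.1 hxc]
      split_ifs with h1 h2
      · omega
      · exact le_rfl
      · rw [show idxOf x cs = idxOf y cs by omega] at hxt
        exact ih _ hmem hwft ((mem_iff _ _).1 hyt) ((mem_iff _ _).1 hxt)

theorem card_transitive_and_planar {s : ℕ → ℕ} {a b c : ℕ} (hab : a < b) (hbc : b < c)
    (t : STree) (hwf : wf s t) (ha : a ∈ labels t) (hb : b ∈ labels t) (hc : c ∈ labels t) :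
    (card s b a t = 0 ∨ card s c b t ≤ card s c a t) ∧
      (card s b a t = s b ∨ card s c a t ≤ card s c b t) := by
  induction t using childInduction with
  | leaf => simp [labels] at ha
  | node r cs ih =>
    rw [mem_node_iff hwf] at ha hb hc
    have ha' := ha.resolve_left (by omega)
    have hb' := hb.resolve_left (by omega)
    obtain ⟨-, hat⟩ := getD_idxOf_mem ha'.1
    obtain ⟨-, hbt⟩ := getD_idxOf_mem hb'.1
    by_cases hrc : r = c
    · simp only [card, if_pos hrc, if_neg (show r ≠ b by omega), cardL_eq hb'.1 ha'.1]
      split_ifs <;> omega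
    · have hc' := hc.resolve_left (Ne.symm hrc)
      obtain ⟨hmem, hct⟩ := getD_idxOf_mem hc'.1
      have hwft := wfL_iff.1 hwf.2.2 _ hmem
      have hbt' : idxOf b cs = idxOf c cs → mem b (cs.getD (idxOf c cs) .leaf) = true :=
        fun h => h ▸ hbt
      have hat' : idxOf a cs = idxOf c cs → mem a (cs.getD (idxOf c cs) .leaf) = true :=
        fun h => h ▸ hat
      have hbound : ∀ x, x < c → mem x (cs.getD (idxOf c cs) .leaf) = true →
          card s c x (cs.getD (idxOf c cs) .leaf) ≤ s c := fun x hx hxt =>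
        card_le hx _ hwft ((mem_iff _ _).1 hct) ((mem_iff _ _).1 hxt)
      have hb1 := fun h => hbound b hbc (hbt' h)
      have hb2 := fun h => hbound a (hab.trans hbc) (hat' h)
      -- the induction hypothesis only enters when `a`, `b`, `c` lie in the same child
      have ih' : idxOf a cs = idxOf c cs → idxOf b cs = idxOf c cs →
          (card s b a (cs.getD (idxOf b cs) .leaf) = 0 ∨
            card s c b (cs.getD (idxOf c cs) .leaf) ≤ card s c a (cs.getD (idxOf c cs) .leaf)) ∧
          (card s b a (cs.getD (idxOf b cs) .leaf) = s b ∨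
            card s c a (cs.getD (idxOf c cs) .leaf) ≤ card s c b (cs.getD (idxOf c cs) .leaf)) :=
        fun h1 h2 => by
          rw [h2]
          exact ih _ hmem hwft ((mem_iff _ _).1 (hat' h1)) ((mem_iff _ _).1 (hbt' h2))
            ((mem_iff _ _).1 hct)
      simp only [card, if_neg hrc, if_neg (show r ≠ b by omega), cardL_eq hb'.1 ha'.1,
        cardL_eq hc'.1 ha'.1, cardL_eq hc'.1 hb'.1]
      split_ifs <;> omega

theorem IsSDecreasingTree.isTreeInvSet {n : ℕ} {s : ℕ → ℕ} {T : STree}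
    (hT : IsSDecreasingTree n s T) : IsTreeInvSet n s (treeInv n s T) := by
  have hmem : ∀ x, 1 ≤ x → x ≤ n → x ∈ labels T := fun x h1 h2 => by
    rw [hT.2.mem_iff, List.mem_range'_1]
    omega
  have hcard : ∀ a b c, a < b → b < c → 1 ≤ a → c ≤ n →
      (treeInv n s T b a = 0 ∨ treeInv n s T c b ≤ treeInv n s T c a) ∧
      (treeInv n s T b a = s b ∨ treeInv n s T c a ≤ treeInv n s T c b) := by
    intro a b c hab hbc ha hc
    simp only [treeInv, if_pos (show 1 ≤ a ∧ a < b ∧ b ≤ n by omega),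
      if_pos (show 1 ≤ b ∧ b < c ∧ c ≤ n by omega), if_pos (show 1 ≤ a ∧ a < c ∧ c ≤ n by omega)]
    exact card_transitive_and_planar hab hbc T hT.1 (hmem a ha (by omega))
      (hmem b (by omega) (by omega)) (hmem c (by omega) hc)
  refine ⟨⟨fun y x => ?_, fun y x h => if_neg h⟩, fun a b c hab hbc => ?_,
    fun a b c hab hbc => ?_⟩
  · simp only [treeInv]
    split_ifs with h
    · exact card_le h.2.1 T hT.1 (hmem y (by omega) h.2.2) (hmem x h.1 (by omega))
    · exact Nat.zero_le _
  · by_cases h : 1 ≤ a ∧ c ≤ n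
    · exact (hcard a b c hab hbc h.1 h.2).1
    · simp only [treeInv]
      split_ifs <;> omega
  · by_cases h : 1 ≤ a ∧ c ≤ n
    · exact (hcard a b c hab hbc h.1 h.2).2
    · simp only [treeInv]
      split_ifs <;> omega

theorem idxOf_map_range {x j k : ℕ} {f : ℕ → STree} (hj : j < k)
    (hf : ∀ i, mem x (f i) = true ↔ i = j) : idxOf x ((List.range k).map f) = j := by
  rw [idxOf_eq_findIdx, List.findIdx_eq (by simpa using hj)]
  simp only [List.getElem_map, List.getElem_range, hf, true_and]
  intro i hi
  rw [Bool.eq_false_iff, ne_eq, hf]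
  exact hi.ne

theorem getD_map_range {j k : ℕ} {f : ℕ → STree} (hj : j < k) :
    ((List.range k).map f).getD j .leaf = f j := by
  rw [List.getD_eq_getElem _ _ (by simpa using hj)]
  simp

theorem filter_erase_max'_ssubset {α : Type*} [LinearOrder α] {A : Finset α} (h : A.Nonempty)
    (p : α → Prop) [DecidablePred p] : (A.erase (A.max' h)).filter p ⊂ A :=
  (Finset.filter_subset _ _).trans_ssubset (Finset.erase_ssubset (A.max'_mem h))

/-- Inverse of `treeInv` on tree-inversion sets. -/
def ofInv (s : ℕ → ℕ) (I : ℕ → ℕ → ℕ) (A : Finset ℕ) : STree :=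
  if h : A.Nonempty then
    .node (A.max' h) ((List.range (s (A.max' h) + 1)).map
      fun i => ofInv s I ((A.erase (A.max' h)).filter (I (A.max' h) · = i)))
  else .leaf
termination_by A.card
decreasing_by exact Finset.card_lt_card (filter_erase_max'_ssubset h _)

theorem ofInv_of_nonempty (s : ℕ → ℕ) (I : ℕ → ℕ → ℕ) {A : Finset ℕ} (h : A.Nonempty) :
    ofInv s I A = .node (A.max' h) ((List.range (s (A.max' h) + 1)).map
      fun i => ofInv s I ((A.erase (A.max' h)).filter (I (A.max' h) · = i))) := by
  rw [ofInv, dif_pos h]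

theorem ofInv_of_empty (s : ℕ → ℕ) (I : ℕ → ℕ → ℕ) : ofInv s I ∅ = .leaf := by
  rw [ofInv, dif_neg Finset.not_nonempty_empty]

section Realization

variable {s : ℕ → ℕ} {I : ℕ → ℕ → ℕ}

theorem mem_labels_ofInv (hb : ∀ y x, I y x ≤ s y) (A : Finset ℕ) (x : ℕ) :
    x ∈ labels (ofInv s I A) ↔ x ∈ A := by
  induction A using Finset.strongInduction generalizing x with
  | H A ih =>
    rcases A.eq_empty_or_nonempty with rfl | hA
    · simp [ofInv_of_empty, labels]
    · have := hb (A.max' hA) x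
      simp only [ofInv_of_nonempty s I hA, labels, labelsL_eq_flatMap, List.mem_cons,
        List.flatMap_map, List.mem_flatMap, List.mem_range,
        ih _ (filter_erase_max'_ssubset hA _), Finset.mem_filter, Finset.mem_erase]
      constructor
      · rintro (rfl | ⟨i, -, ⟨-, hx⟩, -⟩)
        exacts [A.max'_mem hA, hx]
      · intro hx
        by_cases hxm : x = A.max' hA
        · exact Or.inl hxm
        · exact Or.inr ⟨_, by omega, ⟨hxm, hx⟩, rfl⟩

theorem nodup_labels_ofInv (hb : ∀ y x, I y x ≤ s y) (A : Finset ℕ) :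
    (labels (ofInv s I A)).Nodup := by
  induction A using Finset.strongInduction with
  | H A ih =>
    rcases A.eq_empty_or_nonempty with rfl | hA
    · simp [ofInv_of_empty, labels]
    · have hsub := filter_erase_max'_ssubset hA
      rw [ofInv_of_nonempty s I hA, labels, labelsL_eq_flatMap, List.nodup_cons,
        List.flatMap_map, List.nodup_flatMap]
      refine ⟨?_, fun i _ => ih _ (hsub _), List.nodup_range.pairwise_of_forall_ne ?_⟩
      · simp [List.mem_flatMap, mem_labels_ofInv hb]
      · intro i _ j _ hij x hxi hxj
        rw [mem_labels_ofInv hb, Finset.mem_filter] at hxi hxj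
        exact hij (hxi.2.symm.trans hxj.2)

theorem wf_ofInv (hb : ∀ y x, I y x ≤ s y) (A : Finset ℕ) : wf s (ofInv s I A) := by
  induction A using Finset.strongInduction with
  | H A ih =>
    rcases A.eq_empty_or_nonempty with rfl | hA
    · simp [ofInv_of_empty, wf]
    · rw [ofInv_of_nonempty s I hA, wf, wfL_iff]
      refine ⟨by simp, fun x hx => ?_, ?_⟩
      · simp only [labelsL_eq_flatMap, List.flatMap_map, List.mem_flatMap,
          mem_labels_ofInv hb, Finset.mem_filter, Finset.mem_erase] at hx
        obtain ⟨-, -, ⟨hxm, hxA⟩, -⟩ := hx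
        exact lt_of_le_of_ne (A.le_max' x hxA) hxm
      · simp only [List.mem_map]
        rintro _ ⟨i, -, rfl⟩
        exact ih _ (filter_erase_max'_ssubset hA _)

theorem card_ofInv (hb : ∀ y x, I y x ≤ s y) (ht : InvTransitive I) (hp : InvPlanar s I)
    (A : Finset ℕ) {y x : ℕ} (hy : y ∈ A) (hx : x ∈ A) (hxy : x < y) :
    card s y x (ofInv s I A) = I y x := by
  induction A using Finset.strongInduction generalizing y x with
  | H A ih =>
    have hA : A.Nonempty := ⟨y, hy⟩
    set m := A.max' hA
    have hym : y ≤ m := A.le_max' y hy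
    have hidx : ∀ z ∈ A, z ≠ m → idxOf z ((List.range (s m + 1)).map
        fun i => ofInv s I ((A.erase m).filter (I m · = i))) = I m z := fun z hz hzm =>
      idxOf_map_range (Nat.lt_succ_of_le (hb m z)) fun i => by
        rw [mem_iff, mem_labels_ofInv hb, Finset.mem_filter, Finset.mem_erase]
        exact ⟨fun h => h.2.symm, fun h => ⟨⟨hzm, hz⟩, h.symm⟩⟩
    rw [ofInv_of_nonempty s I hA]
    by_cases hym' : m = y
    · rw [card, if_pos hym', hidx x hx (by omega), hym']
    · have hmem : ∀ z ∈ A, z ≠ m → memL z ((List.range (s m + 1)).map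
          fun i => ofInv s I ((A.erase m).filter (I m · = i))) = true := fun z hz hzm => by
        rw [memL_iff, labelsL_eq_flatMap, List.flatMap_map, List.mem_flatMap]
        exact ⟨I m z, List.mem_range.2 (Nat.lt_succ_of_le (hb m z)),
          (mem_labels_ofInv hb _ z).2 (by simp [hz, hzm])⟩
      rw [card, if_neg hym', cardL_eq (hmem y hy (Ne.symm hym')) (hmem x hx (by omega)),
        hidx y hy (Ne.symm hym'), hidx x hx (by omega)]
      have hyx := ht x y m hxy (by omega)
      have hpl := hp x y m hxy (by omega)
      split_ifs with h1 h2
      · omega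
      · omega
      · rw [getD_map_range (Nat.lt_succ_of_le (hb m y))]
        exact ih _ (filter_erase_max'_ssubset hA _)
          (Finset.mem_filter.2 ⟨Finset.mem_erase.2 ⟨Ne.symm hym', hy⟩, rfl⟩)
          (Finset.mem_filter.2 ⟨Finset.mem_erase.2 ⟨by omega, hx⟩, by omega⟩) hxy

theorem exists_treeInv_eq {n : ℕ} (hI : IsTreeInvSet n s I) :
    ∃ T, IsSDecreasingTree n s T ∧ treeInv n s T = I := by
  obtain ⟨⟨hb, hsupp⟩, ht, hp⟩ := hI
  refine ⟨ofInv s I (Finset.Icc 1 n), ⟨wf_ofInv hb _, ?_⟩, ?_⟩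
  · rw [List.perm_ext_iff_of_nodup (nodup_labels_ofInv hb _) List.nodup_range']
    simp [mem_labels_ofInv hb, List.mem_range'_1]
    omega
  · ext y x
    unfold treeInv
    split_ifs with h
    · exact card_ofInv hb ht hp _ (by simp; omega) (by simp; omega) h.2.1
    · exact (hsupp y x h).symm

end Realization

section TransitiveClosure

open Relation

variable {n : ℕ} {s : ℕ → ℕ} {I : ℕ → ℕ → ℕ}

def TcStep (I : ℕ → ℕ → ℕ) (u w : ℕ) : Prop := w < u ∧ 0 < I u w

theorem tc_eq_sSup (I : ℕ → ℕ → ℕ) (c a : ℕ) :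
    tc I c a = sSup (I c '' {b | TcStep I c b ∧ ReflTransGen (TcStep I) b a}) := by
  unfold tc
  congr 1
  ext v
  constructor
  · rintro ⟨b, l, hch, hlast, rfl⟩
    obtain ⟨hcb, hl⟩ := List.isChain_cons_cons.1 hch
    exact ⟨b, ⟨hcb, List.relationReflTransGen_of_exists_isChain_cons l hl hlast⟩, rfl⟩
  · rintro ⟨b, ⟨hcb, hba⟩, rfl⟩
    obtain ⟨l, hl, hlast⟩ := List.exists_isChain_cons_of_relationReflTransGen hba
    exact ⟨b, l, List.isChain_cons_cons.2 ⟨hcb, hl⟩, hlast, rfl⟩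

theorem le_tc_of_reach (hb : ∀ y x, I y x ≤ s y) {c b a : ℕ} (hcb : TcStep I c b)
    (hba : ReflTransGen (TcStep I) b a) : I c b ≤ tc I c a := by
  rw [tc_eq_sSup]
  exact le_csSup ⟨s c, by rintro _ ⟨_, -, rfl⟩; exact hb _ _⟩ ⟨b, ⟨hcb, hba⟩, rfl⟩

theorem tc_le {c a m : ℕ}
    (h : ∀ b, TcStep I c b → ReflTransGen (TcStep I) b a → I c b ≤ m) : tc I c a ≤ m := by
  rw [tc_eq_sSup]
  exact csSup_le' (by rintro _ ⟨b, ⟨hcb, hba⟩, rfl⟩; exact h b hcb hba)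

theorem exists_reach_of_tc_pos {c a : ℕ} (h : 0 < tc I c a) :
    ∃ b, TcStep I c b ∧ ReflTransGen (TcStep I) b a := by
  by_contra! hne
  exact h.ne' (Nat.le_zero.1 (tc_le fun b hcb hba => absurd hba (hne b hcb)))

theorem le_of_reach {b a : ℕ} (h : ReflTransGen (TcStep I) b a) : a ≤ b := by
  induction h with
  | refl => exact le_rfl
  | tail _ hstep ih => exact hstep.1.le.trans ih

theorem tc_le_of_le {M : ℕ → ℕ → ℕ} (hIM : I ≤ M) (hM : InvTransitive M) : tc I ≤ M := by
  have descend : ∀ {c b a}, b < c → ReflTransGen (TcStep I) b a → M c b ≤ M c a := by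
    intro c b a hbc h
    induction h with
    | refl => exact le_rfl
    | @tail x y hbx hxy ih =>
      refine ih.trans ((hM y x c hxy.1 ((le_of_reach hbx).trans_lt hbc)).resolve_left ?_)
      exact (hxy.2.trans_le (hIM x y)).ne'
  intro c a
  exact tc_le fun b hcb hba => (hIM c b).trans (descend hcb.1 hba)

theorem invTransitive_tc (hb : ∀ y x, I y x ≤ s y) : InvTransitive (tc I) := by
  intro a b c _ _
  rcases Nat.eq_zero_or_pos (tc I b a) with h | h
  · exact Or.inl h
  · obtain ⟨b', hbb', hb'a⟩ := exists_reach_of_tc_pos h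
    exact Or.inr (tc_le fun d hcd hdb =>
      le_tc_of_reach hb hcd (hdb.trans (ReflTransGen.head hbb' hb'a)))

/-- The inversion set of the top element of the `s`-weak order. -/
def topInv (n : ℕ) (s : ℕ → ℕ) : ℕ → ℕ → ℕ := fun y x =>
  if 1 ≤ x ∧ x < y ∧ y ≤ n then s y else 0

theorem isMultiInvSet_iff_le_topInv : IsMultiInvSet n s I ↔ I ≤ topInv n s := by
  constructor
  · rintro ⟨hb, hsupp⟩ y x
    unfold topInv
    split_ifs with h
    exacts [hb y x, (hsupp y x h).le]
  · intro h
    refine ⟨fun y x => (h y x).trans ?_, fun y x hyx => Nat.le_zero.1 ((h y x).trans_eq ?_)⟩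
    · unfold topInv; split_ifs <;> simp
    · exact if_neg hyx

theorem invTransitive_topInv : InvTransitive (topInv n s) := by
  intro a b c _ _
  unfold topInv
  split_ifs <;> omega

theorem isMultiInvSet_tc (hI : IsMultiInvSet n s I) : IsMultiInvSet n s (tc I) :=
  isMultiInvSet_iff_le_topInv.2 <|
    tc_le_of_le (isMultiInvSet_iff_le_topInv.1 hI) invTransitive_topInv

theorem le_tc (hI : IsMultiInvSet n s I) : I ≤ tc I := by
  intro c a
  rcases Nat.eq_zero_or_pos (I c a) with h | h
  · exact h.trans_le (Nat.zero_le _)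
  · have hac : a < c := by
      by_contra hca
      exact h.ne' (hI.2 c a (by omega))
    exact le_tc_of_reach hI.1 ⟨hac, h⟩ ReflTransGen.refl

theorem reach_of_reach {a b u : ℕ} (hab : a ≤ b)
    (hjump : ∀ x y, y < b → b < x → TcStep I x y → ReflTransGen (TcStep I) y a → I x y ≤ I x b)
    (h : ReflTransGen (TcStep I) u a) (hbu : b ≤ u) : ReflTransGen (TcStep I) u b := by
  induction h using ReflTransGen.head_induction_on with
  | refl => exact le_antisymm hbu hab ▸ ReflTransGen.refl
  | @head x y hxy hya ih =>
    rcases le_or_gt b y with hby | hyb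
    · exact ReflTransGen.head hxy (ih hby)
    · rcases hbu.eq_or_lt with rfl | hbx
      · exact ReflTransGen.refl
      · exact ReflTransGen.single ⟨hbx, hxy.2.trans_le (hjump x y hyb hbx hxy hya)⟩

theorem tc_le_tc_of_jump (hb : ∀ y x, I y x ≤ s y) {a b c : ℕ} (hab : a < b) (hbc : b < c)
    (hjump : ∀ x y, y < b → b < x → TcStep I x y → ReflTransGen (TcStep I) y a → I x y ≤ I x b) :
    tc I c a ≤ tc I c b := by
  refine tc_le fun d hcd hda => ?_
  rcases le_or_gt b d with hbd | hdb
  · exact le_tc_of_reach hb hcd (reach_of_reach hab.le hjump hda hbd)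
  · have hle := hjump c d hdb hbc hcd hda
    exact hle.trans (le_tc_of_reach hb ⟨hbc, hcd.2.trans_le hle⟩ ReflTransGen.refl)

theorem invPlanar_tc (hb : ∀ y x, I y x ≤ s y) (hp : InvPlanar s I) : InvPlanar s (tc I) := by
  intro a b c hab hbc
  have htc : tc I b a ≤ s b := tc_le fun d _ _ => hb b d
  rcases htc.eq_or_lt with h | h
  · exact Or.inl h
  · refine Or.inr (tc_le_tc_of_jump hb hab hbc fun x y hyb _ hxy hya => ?_)
    refine (hp y b x hyb (by omega)).resolve_left fun hby => ?_
    have := le_tc_of_reach hb ⟨hyb, hby ▸ (Nat.zero_le _).trans_lt h⟩ hya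
    omega

def InvTamari (I : ℕ → ℕ → ℕ) : Prop :=
  ∀ a b c : ℕ, a < b → b < c → I c a ≤ I c b

/-- `1 ≤ a` because `mirrorInv` vanishes at `a = 0`. -/
def InvAntiTamari (I : ℕ → ℕ → ℕ) : Prop :=
  ∀ a b c : ℕ, 1 ≤ a → a < b → b < c → I c b ≤ I c a

theorem invTamari_tc (hb : ∀ y x, I y x ≤ s y) (hT : InvTamari I) : InvTamari (tc I) :=
  fun _ _ _ hab hbc => tc_le_tc_of_jump hb hab hbc fun _ _ hyb hbx _ _ => hT _ _ _ hyb hbx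

theorem invAntiTamari_tc (hb : ∀ y x, I y x ≤ s y) (hA : InvAntiTamari I) :
    InvAntiTamari (tc I) := by
  intro a b c ha hab hbc
  refine tc_le fun d hcd hdb => ?_
  cases hdb with
  | refl =>
    have hle := hA a b c ha hab hbc
    exact hle.trans (le_tc_of_reach hb ⟨hab.trans hbc, hcd.2.trans_le hle⟩ ReflTransGen.refl)
  | @tail x _ hdx hxb =>
    have hle := hA a b x ha hab hxb.1
    exact le_tc_of_reach hb hcd (hdx.tail ⟨hab.trans hxb.1, hxb.2.trans_le hle⟩)

theorem IsMultiInvSet.sup {J : ℕ → ℕ → ℕ} (hI : IsMultiInvSet n s I)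
    (hJ : IsMultiInvSet n s J) : IsMultiInvSet n s (I ⊔ J) := by
  rw [isMultiInvSet_iff_le_topInv] at *
  exact sup_le hI hJ

theorem InvPlanar.sup {J : ℕ → ℕ → ℕ} (hbI : ∀ y x, I y x ≤ s y) (hbJ : ∀ y x, J y x ≤ s y)
    (hI : InvPlanar s I) (hJ : InvPlanar s J) : InvPlanar s (I ⊔ J) := by
  intro a b c hab hbc
  have := hbI b a
  have := hbJ b a
  rcases hI a b c hab hbc with h | h
  · left; simp only [Pi.sup_apply]; omega
  rcases hJ a b c hab hbc with h' | h'
  · left; simp only [Pi.sup_apply]; omega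
  · exact Or.inr (sup_le_sup h h')

theorem InvTamari.sup {J : ℕ → ℕ → ℕ} (hI : InvTamari I) (hJ : InvTamari J) :
    InvTamari (I ⊔ J) :=
  fun a b c hab hbc => sup_le_sup (hI a b c hab hbc) (hJ a b c hab hbc)

theorem InvAntiTamari.sup {J : ℕ → ℕ → ℕ} (hI : InvAntiTamari I) (hJ : InvAntiTamari J) :
    InvAntiTamari (I ⊔ J) :=
  fun a b c ha hab hbc => sup_le_sup (hI a b c ha hab hbc) (hJ a b c ha hab hbc)

theorem IsTreeInvSet.tc_sup {J : ℕ → ℕ → ℕ} (hI : IsTreeInvSet n s I)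
    (hJ : IsTreeInvSet n s J) : IsTreeInvSet n s (tc (I ⊔ J)) :=
  have hIJ := hI.1.sup hJ.1
  ⟨isMultiInvSet_tc hIJ, invTransitive_tc hIJ.1,
    invPlanar_tc hIJ.1 (hI.2.2.sup hI.1.1 hJ.1.1 hJ.2.2)⟩

end TransitiveClosure

section Mirror

variable {n : ℕ} {s : ℕ → ℕ} {I : ℕ → ℕ → ℕ}

/-- The mirror involution `card ↦ s(·) - card`, kept supported on `1 ≤ x < y ≤ n`. -/
def mirrorInv (n : ℕ) (s : ℕ → ℕ) (I : ℕ → ℕ → ℕ) : ℕ → ℕ → ℕ := topInv n s - I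

theorem mirrorInv_apply (y x : ℕ) :
    mirrorInv n s I y x = if 1 ≤ x ∧ x < y ∧ y ≤ n then s y - I y x else 0 := by
  simp only [mirrorInv, topInv, Pi.sub_apply]
  split_ifs <;> simp

theorem isMultiInvSet_mirrorInv : IsMultiInvSet n s (mirrorInv n s I) :=
  isMultiInvSet_iff_le_topInv.2 tsub_le_self

theorem mirrorInv_antitone {J : ℕ → ℕ → ℕ} (h : I ≤ J) : mirrorInv n s J ≤ mirrorInv n s I :=
  tsub_le_tsub_left h _

theorem mirrorInv_le_comm {J : ℕ → ℕ → ℕ} : mirrorInv n s I ≤ J ↔ mirrorInv n s J ≤ I :=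
  tsub_le_iff_tsub_le

theorem le_mirrorInv_comm {J : ℕ → ℕ → ℕ} (hI : IsMultiInvSet n s I)
    (hJ : IsMultiInvSet n s J) : I ≤ mirrorInv n s J ↔ J ≤ mirrorInv n s I :=
  le_tsub_iff_le_tsub (isMultiInvSet_iff_le_topInv.1 hI) (isMultiInvSet_iff_le_topInv.1 hJ)

theorem invTransitive_mirrorInv (hp : InvPlanar s I) : InvTransitive (mirrorInv n s I) := by
  intro a b c hab hbc
  have := hp a b c hab hbc
  simp only [mirrorInv_apply]
  split_ifs <;> omega

theorem invPlanar_mirrorInv (ht : InvTransitive I) : InvPlanar s (mirrorInv n s I) := by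
  intro a b c hab hbc
  have := ht a b c hab hbc
  simp only [mirrorInv_apply]
  split_ifs <;> omega

theorem isTreeInvSet_mirrorInv (hI : IsTreeInvSet n s I) : IsTreeInvSet n s (mirrorInv n s I) :=
  ⟨isMultiInvSet_mirrorInv, invTransitive_mirrorInv hI.2.2, invPlanar_mirrorInv hI.2.1⟩

theorem invAntiTamari_mirrorInv (hT : InvTamari I) : InvAntiTamari (mirrorInv n s I) := by
  intro a b c _ hab hbc
  have := hT a b c hab hbc
  simp only [mirrorInv_apply]
  split_ifs <;> omega

theorem invTamari_mirrorInv (hA : InvAntiTamari I) : InvTamari (mirrorInv n s I) := by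
  intro a b c hab hbc
  simp only [mirrorInv_apply]
  split_ifs with h1 h2
  · have := hA a b c h1.1 hab hbc
    omega
  all_goals omega

end Mirror

section WeakOrder

variable {n : ℕ} {s : ℕ → ℕ} [Lattice {T : STree // IsSDecreasingTree n s T}]

theorem treeInv_sup
    (hle : ∀ T R : {T : STree // IsSDecreasingTree n s T},
      T ≤ R ↔ treeInv n s T.1 ≤ treeInv n s R.1)
    (T R : {T : STree // IsSDecreasingTree n s T}) :
    treeInv n s (T ⊔ R).1 = tc (treeInv n s T.1 ⊔ treeInv n s R.1) := by
  have hT := T.2.isTreeInvSet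
  have hR := R.2.isTreeInvSet
  obtain ⟨U, hU, hUinv⟩ := exists_treeInv_eq (hT.tc_sup hR)
  have hle_tc := le_tc (hT.1.sup hR.1)
  apply le_antisymm
  · have hup : T ⊔ R ≤ ⟨U, hU⟩ := sup_le
      ((hle _ _).2 (hUinv ▸ le_sup_left.trans hle_tc))
      ((hle _ _).2 (hUinv ▸ le_sup_right.trans hle_tc))
    exact hUinv ▸ (hle _ _).1 hup
  · exact tc_le_of_le (sup_le ((hle _ _).1 le_sup_left) ((hle _ _).1 le_sup_right))
      (T ⊔ R).2.isTreeInvSet.2.1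

theorem treeInv_inf
    (hle : ∀ T R : {T : STree // IsSDecreasingTree n s T},
      T ≤ R ↔ treeInv n s T.1 ≤ treeInv n s R.1)
    (T R : {T : STree // IsSDecreasingTree n s T}) :
    treeInv n s (T ⊓ R).1 = mirrorInv n s
      (tc (mirrorInv n s (treeInv n s T.1) ⊔ mirrorInv n s (treeInv n s R.1))) := by
  have hT := isTreeInvSet_mirrorInv T.2.isTreeInvSet
  have hR := isTreeInvSet_mirrorInv R.2.isTreeInvSet
  have hTR := (T ⊓ R).2.isTreeInvSet
  have hX := hT.tc_sup hR
  obtain ⟨V, hV, hVinv⟩ := exists_treeInv_eq (isTreeInvSet_mirrorInv hX)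
  have hle_tc := le_tc (hT.1.sup hR.1)
  apply le_antisymm
  · rw [le_mirrorInv_comm hTR.1 hX.1]
    exact tc_le_of_le (sup_le (mirrorInv_antitone ((hle _ _).1 inf_le_left))
      (mirrorInv_antitone ((hle _ _).1 inf_le_right))) (invTransitive_mirrorInv hTR.2.2)
  · have hdown : ⟨V, hV⟩ ≤ T ⊓ R := le_inf
      ((hle _ _).2 (hVinv ▸ mirrorInv_le_comm.1 (le_sup_left.trans hle_tc)))
      ((hle _ _).2 (hVinv ▸ mirrorInv_le_comm.1 (le_sup_right.trans hle_tc)))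
    exact hVinv ▸ (hle _ _).1 hdown

end WeakOrder

end STree

open STree in
/-- The `s`-Tamari trees form a sublattice of the `s`-weak order: the join and
the meet of two `s`-Tamari trees are again `s`-Tamari trees. -/
theorem sTamari_sublattice (n : ℕ) (s : ℕ → ℕ)
    [Lattice {T : STree // IsSDecreasingTree n s T}]
    (hle : ∀ T R : {T : STree // IsSDecreasingTree n s T},
      T ≤ R ↔ sWeakLE n s T.1 R.1) :
    ∀ T R : {T : STree // IsSDecreasingTree n s T},
      TamariProp n s T.1 → TamariProp n s R.1 →
      TamariProp n s (T ⊔ R).1 ∧ TamariProp n s (T ⊓ R).1 := by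
  intro T R hT hR
  constructor
  · change InvTamari _
    rw [treeInv_sup hle]
    exact invTamari_tc (T.2.isTreeInvSet.1.sup R.2.isTreeInvSet.1).1 (InvTamari.sup hT hR)
  · change InvTamari _
    rw [treeInv_inf hle]
    exact invTamari_mirrorInv <| invAntiTamari_tc
      (isMultiInvSet_mirrorInv.sup isMultiInvSet_mirrorInv).1
      ((invAntiTamari_mirrorInv hT).sup (invAntiTamari_mirrorInv hR))
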